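/- arXiv:1504.00519 — 6 statements merged into one kernel-verified Lean document; each statement's English description precedes it below -/
import Mathlib

section
/- Fix a>0 and θ>0. There exists a constant C>0, depending only on a, θ and the doubling constant c_d, such that for every z₀=(x₀,t₀)∈S and every r>0 with B̂(z₀,(1+θ)r) ⊆ S, and for every nonnegative Radon measure μ supported in the closure of B̂(z₀,r) satisfying ∫ G_a(z,ζ) dμ(ζ) ≤ 1 for all z∈S, one has μ(closure of B̂(z₀,r)) ≤ C·|B(x₀,r)|. In particular, C_a(closure of B̂(z₀,r)) ≤ C·|B(x₀,r)|. -/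
open MeasureTheory Set
open scoped ENNReal NNReal

noncomputable section

/-- ℝ^N with Euclidean structure and Lebesgue measure. -/
abbrev Vec (N : ℕ) := EuclideanSpace ℝ (Fin N)

/-- The `d`-ball `B(x,r) = {y : d(x,y) < r}`. -/
def dBall {N : ℕ} (d : Vec N → Vec N → ℝ) (x : Vec N) (r : ℝ) : Set (Vec N) :=
  {y | d x y < r}

/-- Lebesgue measure is doubling with respect to `d`, with doubling constant `cd`. -/
def Doubling {N : ℕ} (d : Vec N → Vec N → ℝ) (cd : ℝ) : Prop :=
  ∀ (x : Vec N) (r : ℝ), 0 < r →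
    volume (dBall d x (2 * r)) ≤ ENNReal.ofReal cd * volume (dBall d x r)

/-- `d` is a metric on ℝ^N inducing the Euclidean topology (with bounded `d`-balls,
as in assumption (D1) of the paper). -/
structure GoodMetric {N : ℕ} (d : Vec N → Vec N → ℝ) : Prop where
  nonneg : ∀ x y, 0 ≤ d x y
  eq_zero_iff : ∀ x y, d x y = 0 ↔ x = y
  symm : ∀ x y, d x y = d y x
  triangle : ∀ x y z, d x z ≤ d x y + d y z
  cont : Continuous fun p : Vec N × Vec N => d p.1 p.2
  finer : ∀ (x : Vec N) (ε : ℝ), 0 < ε → ∃ δ > 0, ∀ y, d x y < δ → dist x y < ε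
  bounded : ∀ (x : Vec N) (r : ℝ), Bornology.IsBounded (dBall d x r)

/-- The strip `S = ℝ^N × (T₁,T₂)`. -/
def strip (N : ℕ) (T₁ T₂ : EReal) : Set (Vec N × ℝ) :=
  {z | T₁ < (z.2 : EReal) ∧ (z.2 : EReal) < T₂}

/-- The `d`-Gaussian kernel of exponent `a`. -/
def gaussK {N : ℕ} (d : Vec N → Vec N → ℝ) (a : ℝ) (z ζ : Vec N × ℝ) : ℝ≥0∞ :=
  if ζ.2 < z.2 then
    (volume (dBall d z.1 (Real.sqrt (z.2 - ζ.2))))⁻¹ *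
      ENNReal.ofReal (Real.exp (-a * d z.1 ζ.1 ^ 2 / (z.2 - ζ.2)))
  else 0

/-- Capacity of `F` with respect to the kernel `K`: supremum of total masses of
nonnegative Radon measures supported in `F` whose `K`-potential is `≤ 1` on `X`. -/
def capac {α : Type*} [TopologicalSpace α] [MeasurableSpace α]
    (X : Set α) (K : α → α → ℝ≥0∞) (F : Set α) : ℝ≥0∞ :=
  ⨆ (μ : Measure α) (_ : μ.InnerRegular ∧ IsLocallyFiniteMeasure μ ∧ μ Fᶜ = 0 ∧
      ∀ z ∈ X, ∫⁻ ζ, K z ζ ∂μ ≤ 1), μ F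

/-- The parabolic counterpart `d̂` of `d`. -/
def pdist {N : ℕ} (d : Vec N → Vec N → ℝ) (z ζ : Vec N × ℝ) : ℝ :=
  (d z.1 ζ.1 ^ 4 + (z.2 - ζ.2) ^ 2) ^ (1 / 4 : ℝ)

/-- The parabolic ball `B̂(z,r)` (as a subset of ℝ^{N+1}). -/
def pBall {N : ℕ} (d : Vec N → Vec N → ℝ) (z : Vec N × ℝ) (r : ℝ) : Set (Vec N × ℝ) :=
  {ζ | pdist d z ζ < r}

/-- The ring-shaped set `Ω_k^h(z₀,λ)`. -/
def ringSet {N : ℕ} (d : Vec N → Vec N → ℝ) (S Ω : Set (Vec N × ℝ)) (z₀ : Vec N × ℝ)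
    (lam : ℝ) (k h : ℤ) : Set (Vec N × ℝ) :=
  {ζ ∈ S \ Ω | lam ^ (k + 1) ≤ z₀.2 - ζ.2 ∧ z₀.2 - ζ.2 ≤ lam ^ k ∧
    (1 / lam) ^ (h - 1) ≤ Real.exp (d z₀.1 ζ.1 ^ 2 / (z₀.2 - ζ.2)) ∧
    Real.exp (d z₀.1 ζ.1 ^ 2 / (z₀.2 - ζ.2)) ≤ (1 / lam) ^ h ∧
    pdist d z₀ ζ ≤ Real.sqrt lam}

/-- The set `D_k^h(z₀,λ)`. -/
def DSet {N : ℕ} (d : Vec N → Vec N → ℝ) (S Ω : Set (Vec N × ℝ)) (z₀ : Vec N × ℝ)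
    (lam : ℝ) (k h : ℤ) : Set (Vec N × ℝ) :=
  {ζ ∈ S \ Ω | lam ^ (k + 1) ≤ z₀.2 - ζ.2 ∧ z₀.2 - ζ.2 ≤ lam ^ k ∧
    Real.exp (d z₀.1 ζ.1 ^ 2 / (z₀.2 - ζ.2)) ≤ (1 / lam) ^ h ∧
    pdist d z₀ ζ ≤ Real.sqrt lam}

/-- The Wiener-type series `z_a^b(λ;s)`. -/
def zSeries {N : ℕ} (d : Vec N → Vec N → ℝ) (S Ω : Set (Vec N × ℝ)) (z₀ : Vec N × ℝ)
    (a b lam s : ℝ) : ℝ≥0∞ :=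
  ∑' k : ℕ, ∑' h : ℕ,
    if 1 ≤ k ∧ (k : ℝ) ≤ s ∧ 1 ≤ h then
      ENNReal.ofReal (lam ^ (b * (h : ℝ))) *
        capac S (gaussK d a) (DSet d S Ω z₀ lam (k : ℤ) (h : ℤ)) /
        volume (dBall d z₀.1 (lam ^ ((k : ℝ) / 2)))
    else 0

/-- The section `E_λ(ρ,τ)`. -/
def Eset {N : ℕ} (d : Vec N → Vec N → ℝ) (S Ω : Set (Vec N × ℝ)) (z₀ : Vec N × ℝ)
    (lam ρ τ : ℝ) : Set (Vec N) :=
  {x | (x, τ) ∈ S \ Ω ∧ pdist d z₀ (x, τ) ≤ Real.sqrt lam ∧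
    Real.exp (d z₀.1 x ^ 2 / (z₀.2 - τ)) ≤ ρ}

end

/-!
Test the potential of `μ` at `z = (x₀, t₀ + (1 + m) r²)` with `m = min θ 1`, a point of
`B̂(z₀,(1+θ)r) ⊆ S` lying above the ball. Every `ζ` in the closed ball
satisfies `d(x₀,ξ) ≤ r` and `m r² ≤ t - τ ≤ 4 r²`, so by doubling
`G_a(z,ζ) ≥ (c_d e^{a/m} |B(x₀,r)|)⁻¹`, and integrating against `μ` bounds its mass by
`c_d e^{a/m} |B(x₀,r)|`.
-/

theorem measure_le_inv_of_le_of_lintegral_le_one {α : Type*} [MeasurableSpace α]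
    {μ : Measure α} {f : α → ℝ≥0∞} {F : Set α} {c : ℝ≥0∞} (hF : MeasurableSet F)
    (hc : ∀ x ∈ F, c ≤ f x) (hf : ∫⁻ x, f x ∂μ ≤ 1) : μ F ≤ c⁻¹ := by
  refine ENNReal.le_inv_iff_mul_le.mpr ?_
  calc μ F * c = ∫⁻ _ in F, c ∂μ := by rw [setLIntegral_const, mul_comm]
    _ ≤ ∫⁻ x in F, f x ∂μ := setLIntegral_mono' hF hc
    _ ≤ ∫⁻ x, f x ∂μ := setLIntegral_le_lintegral F f
    _ ≤ 1 := hf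

section Parabolic

variable {N : ℕ} {d : Vec N → Vec N → ℝ}

theorem pdist_nonneg (z ζ : Vec N × ℝ) : 0 ≤ pdist d z ζ := by
  unfold pdist
  positivity

theorem pdist_pow_four (z ζ : Vec N × ℝ) :
    pdist d z ζ ^ 4 = d z.1 ζ.1 ^ 4 + (z.2 - ζ.2) ^ 2 := by
  have h := Real.rpow_inv_natCast_pow (n := 4)
    (by positivity : 0 ≤ d z.1 ζ.1 ^ 4 + (z.2 - ζ.2) ^ 2) (by norm_num)
  rw [← h]
  norm_num [pdist]

theorem pdist_lt_iff_pow_four_lt {z ζ : Vec N × ℝ} {r : ℝ} (hr : 0 ≤ r) :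
    pdist d z ζ < r ↔ d z.1 ζ.1 ^ 4 + (z.2 - ζ.2) ^ 2 < r ^ 4 := by
  rw [← pdist_pow_four, pow_lt_pow_iff_left₀ (pdist_nonneg z ζ) hr (by norm_num)]

theorem GoodMetric.closure_pBall_subset (gm : GoodMetric d) (z : Vec N × ℝ) (r : ℝ) :
    closure (pBall d z r) ⊆ {ζ | d z.1 ζ.1 ≤ r ∧ |z.2 - ζ.2| ≤ r ^ 2} := by
  have hclosed : IsClosed {ζ : Vec N × ℝ | d z.1 ζ.1 ≤ r ∧ |z.2 - ζ.2| ≤ r ^ 2} := by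
    have hd : Continuous fun ζ : Vec N × ℝ => d z.1 ζ.1 :=
      gm.cont.comp (continuous_const.prodMk continuous_fst)
    exact (isClosed_le hd continuous_const).inter
      (isClosed_le (continuous_const.sub continuous_snd).abs continuous_const)
  refine closure_minimal (fun ζ hζ => ?_) hclosed
  have hr : 0 ≤ r := (pdist_nonneg z ζ).trans (le_of_lt hζ)
  have h4 := (pdist_lt_iff_pow_four_lt hr).mp hζ
  have hx : d z.1 ζ.1 ^ 4 ≤ r ^ 4 := by nlinarith [sq_nonneg (z.2 - ζ.2)]
  have ht : (z.2 - ζ.2) ^ 2 ≤ (r ^ 2) ^ 2 := by nlinarith [pow_nonneg (gm.nonneg z.1 ζ.1) 4]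
  exact ⟨(pow_le_pow_iff_left₀ (gm.nonneg _ _) hr (by norm_num)).mp hx,
    abs_le.mpr (abs_le_of_sq_le_sq' ht (by positivity))⟩

theorem GoodMetric.time_shift_mem_pBall (gm : GoodMetric d) (z : Vec N × ℝ) {m θ r : ℝ}
    (hm : 0 ≤ m) (hmθ : m ≤ θ) (hθ : 0 < θ) (hr : 0 < r) :
    (z.1, z.2 + (1 + m) * r ^ 2) ∈ pBall d z ((1 + θ) * r) := by
  have hdz : d z.1 z.1 = 0 := (gm.eq_zero_iff _ _).mpr rfl
  have hgrowth : (1 + m) ^ 2 < (1 + θ) ^ 4 :=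
    (pow_le_pow_left₀ (by linarith) (by linarith) 2).trans_lt
      (pow_lt_pow_right₀ (by linarith) (by norm_num))
  show pdist d z _ < _
  rw [pdist_lt_iff_pow_four_lt (by positivity), hdz]
  calc (0 : ℝ) ^ 4 + (z.2 - (z.2 + (1 + m) * r ^ 2)) ^ 2 = (1 + m) ^ 2 * r ^ 4 := by ring
    _ < (1 + θ) ^ 4 * r ^ 4 := mul_lt_mul_of_pos_right hgrowth (pow_pos hr 4)
    _ = ((1 + θ) * r) ^ 4 := by ring

end Parabolic

theorem inv_le_gaussK {N : ℕ} {d : Vec N → Vec N → ℝ} {cd a m r : ℝ} (hdoub : Doubling d cd)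
    (ha : 0 ≤ a) (hm : 0 < m) (hr : 0 < r) {z ζ : Vec N × ℝ} (hξ : d z.1 ζ.1 ^ 2 ≤ r ^ 2)
    (hlow : m * r ^ 2 ≤ z.2 - ζ.2) (hhigh : z.2 - ζ.2 ≤ (2 * r) ^ 2) :
    (ENNReal.ofReal (cd * Real.exp (a / m)) * volume (dBall d z.1 r))⁻¹ ≤ gaussK d a z ζ := by
  have hΔ : 0 < z.2 - ζ.2 := lt_of_lt_of_le (by positivity) hlow
  have hvol : volume (dBall d z.1 (Real.sqrt (z.2 - ζ.2))) ≤
      ENNReal.ofReal cd * volume (dBall d z.1 r) := by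
    have hsqrt : Real.sqrt (z.2 - ζ.2) ≤ 2 * r := Real.sqrt_le_iff.mpr ⟨by positivity, hhigh⟩
    exact (measure_mono fun y (hy : d z.1 y < _) => hy.trans_le hsqrt).trans (hdoub z.1 r hr)
  have hexp : a * d z.1 ζ.1 ^ 2 / (z.2 - ζ.2) ≤ a / m := by
    rw [div_le_div_iff₀ hΔ hm]
    nlinarith [mul_le_mul_of_nonneg_left hξ ha, mul_le_mul_of_nonneg_left hlow ha]
  rw [gaussK, if_pos (sub_pos.mp hΔ), ENNReal.inv_le_iff_inv_le,
    ENNReal.mul_inv (Or.inr ENNReal.ofReal_ne_top) (Or.inr (by positivity)), inv_inv,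
    ← ENNReal.ofReal_inv_of_pos (Real.exp_pos _), ← Real.exp_neg,
    ENNReal.ofReal_mul' (Real.exp_pos _).le, mul_right_comm]
  gcongr
  rwa [neg_mul, neg_div, neg_neg]

theorem GoodMetric.inv_le_gaussK_of_mem_closure_pBall {N : ℕ}
    {d : Vec N → Vec N → ℝ} (gm : GoodMetric d) {cd a m r : ℝ} (hdoub : Doubling d cd)
    (ha : 0 ≤ a) (hm : 0 < m) (hm1 : m ≤ 1) (hr : 0 < r) {z₀ ζ : Vec N × ℝ}
    (hζ : ζ ∈ closure (pBall d z₀ r)) :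
    (ENNReal.ofReal (cd * Real.exp (a / m)) * volume (dBall d z₀.1 r))⁻¹ ≤
      gaussK d a (z₀.1, z₀.2 + (1 + m) * r ^ 2) ζ := by
  obtain ⟨hx, ht⟩ := gm.closure_pBall_subset z₀ r hζ
  obtain ⟨ht₁, ht₂⟩ := abs_le.mp ht
  refine inv_le_gaussK hdoub ha hm hr ?_ ?_ ?_
  · exact pow_le_pow_left₀ (gm.nonneg _ _) hx 2
  · dsimp only
    nlinarith
  · dsimp only
    nlinarith

/-- Gaussian capacity of closed parabolic balls is controlled by the volume of the
corresponding `d`-ball: every admissible Radon measure for `C_a` on `closure B̂(z₀,r)`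
has total mass at most `C·|B(x₀,r)|`, provided `B̂(z₀,(1+θ)r) ⊆ S`. -/
theorem stmt0 (a θ cd : ℝ) (ha : 0 < a) (hθ : 0 < θ) (hcd : 1 < cd) :
    ∃ C : ℝ, 0 < C ∧
      ∀ (N : ℕ), 1 ≤ N → ∀ d : Vec N → Vec N → ℝ, GoodMetric d → Doubling d cd →
      ∀ T₁ T₂ : EReal, T₁ < T₂ →
      ∀ z₀ : Vec N × ℝ, z₀ ∈ strip N T₁ T₂ →
      ∀ r : ℝ, 0 < r → pBall d z₀ ((1 + θ) * r) ⊆ strip N T₁ T₂ →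
      (∀ μ : Measure (Vec N × ℝ), μ.InnerRegular → IsLocallyFiniteMeasure μ →
          μ (closure (pBall d z₀ r))ᶜ = 0 →
          (∀ z ∈ strip N T₁ T₂, ∫⁻ ζ, gaussK d a z ζ ∂μ ≤ 1) →
          μ (closure (pBall d z₀ r)) ≤ ENNReal.ofReal C * volume (dBall d z₀.1 r)) ∧
      capac (strip N T₁ T₂) (gaussK d a) (closure (pBall d z₀ r)) ≤
        ENNReal.ofReal C * volume (dBall d z₀.1 r) := by
  have hm : 0 < min θ 1 := lt_min hθ one_pos
  refine ⟨cd * Real.exp (a / min θ 1), by positivity, ?_⟩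
  intro N _ d gm hdoub T₁ T₂ _ z₀ _ r hr hsub
  have hz : (z₀.1, z₀.2 + (1 + min θ 1) * r ^ 2) ∈ strip N T₁ T₂ :=
    hsub (gm.time_shift_mem_pBall z₀ hm.le (min_le_left θ 1) hθ hr)
  have key : ∀ μ : Measure (Vec N × ℝ), (∀ z ∈ strip N T₁ T₂, ∫⁻ ζ, gaussK d a z ζ ∂μ ≤ 1) →
      μ (closure (pBall d z₀ r)) ≤
        ENNReal.ofReal (cd * Real.exp (a / min θ 1)) * volume (dBall d z₀.1 r) := fun μ hpot => by
    simpa only [inv_inv] using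
      measure_le_inv_of_le_of_lintegral_le_one isClosed_closure.measurableSet
        (fun _ hζ => gm.inv_le_gaussK_of_mem_closure_pBall hdoub ha.le hm (min_le_right θ 1) hr hζ)
        (hpot _ hz)
  exact ⟨fun μ _ _ _ hpot => key μ hpot, iSup₂_le fun μ hμ => key μ hμ.2.2.2⟩
end

section
/- Let Γ : S×S → [0,∞] be measurable, let F ⊂ S be compact, and let t∈(T₁,T₂) be such that F ⊂ ℝ^N×(T₁,t). Assume there are constants β,Λ>0 such that 1/(βΛ) ≤ ∫_{ℝ^N} Γ(x,t,ξ,τ) dx ≤ βΛ for every (ξ,τ)∈F. Let μ₁, μ₂ be nonnegative Radon measures supported in F such that Γ∗μ₁(z) ≤ Γ∗μ₂(z) for every z∈S∖F, where Γ∗μ(z)=∫_F Γ(z,ζ)dμ(ζ). Then μ₁(F) ≤ (βΛ)² μ₂(F). -/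
open MeasureTheory Set
open scoped ENNReal NNReal

/-- Comparison of total masses of measures from comparison of their Γ-potentials
off the compact set `F` (Lemma 2.2 of the paper). -/
theorem stmt1 (N : ℕ) (hN : 1 ≤ N) (T₁ T₂ : EReal) (hT : T₁ < T₂)
    (Γ : (Vec N × ℝ) → (Vec N × ℝ) → ℝ≥0∞)
    (hΓ : Measurable (Function.uncurry Γ))
    (F : Set (Vec N × ℝ)) (hF : IsCompact F) (hFS : F ⊆ strip N T₁ T₂)
    (t : ℝ) (ht₁ : T₁ < (t : EReal)) (ht₂ : (t : EReal) < T₂)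
    (hFt : ∀ ζ ∈ F, ζ.2 < t)
    (β Λ : ℝ) (hβ : 0 < β) (hΛ : 0 < Λ)
    (hlow : ∀ ζ ∈ F, ENNReal.ofReal (1 / (β * Λ)) ≤ ∫⁻ x, Γ (x, t) ζ)
    (hup : ∀ ζ ∈ F, ∫⁻ x, Γ (x, t) ζ ≤ ENNReal.ofReal (β * Λ))
    (μ₁ μ₂ : Measure (Vec N × ℝ))
    (hμ₁r : μ₁.InnerRegular) (hμ₁f : IsLocallyFiniteMeasure μ₁)
    (hμ₂r : μ₂.InnerRegular) (hμ₂f : IsLocallyFiniteMeasure μ₂)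
    (hμ₁ : μ₁ Fᶜ = 0) (hμ₂ : μ₂ Fᶜ = 0)
    (hcomp : ∀ z ∈ strip N T₁ T₂ \ F,
      ∫⁻ ζ in F, Γ z ζ ∂μ₁ ≤ ∫⁻ ζ in F, Γ z ζ ∂μ₂) :
    μ₁ F ≤ ENNReal.ofReal ((β * Λ) ^ 2) * μ₂ F := by

  have hβΛ : 0 < β * Λ := mul_pos hβ hΛ
  have hFmeas : MeasurableSet F := hF.measurableSet
  -- finiteness of restricted measures
  have hμ₁F : μ₁ F < ⊤ := hF.measure_lt_top
  have hμ₂F : μ₂ F < ⊤ := hF.measure_lt_top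
  haveI : Fact (μ₁ F < ⊤) := ⟨hμ₁F⟩
  haveI : Fact (μ₂ F < ⊤) := ⟨hμ₂F⟩
  -- measurability of the kernel slice
  have hmeas : Measurable (Function.uncurry fun (x : Vec N) (ζ : Vec N × ℝ) => Γ (x, t) ζ) := by
    have : (Function.uncurry fun (x : Vec N) (ζ : Vec N × ℝ) => Γ (x, t) ζ)
        = (Function.uncurry Γ) ∘ (fun p : Vec N × (Vec N × ℝ) => ((p.1, t), p.2)) := rfl
    rw [this]
    exact hΓ.comp (by fun_prop)
  have hmeas₂ : ∀ x : Vec N, Measurable fun ζ : Vec N × ℝ => Γ (x, t) ζ := by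
    intro x
    have : (fun ζ : Vec N × ℝ => Γ (x, t) ζ)
        = (Function.uncurry Γ) ∘ (fun ζ : Vec N × ℝ => ((x, t), ζ)) := rfl
    rw [this]; exact hΓ.comp (by fun_prop)
  have hmeasζ : ∀ ζ : Vec N × ℝ, Measurable fun x : Vec N => Γ (x, t) ζ := by
    intro ζ
    have : (fun x : Vec N => Γ (x, t) ζ)
        = (Function.uncurry Γ) ∘ (fun x : Vec N => ((x, t), ζ)) := rfl
    rw [this]; exact hΓ.comp (by fun_prop)
  -- swap lemmas
  have hswap₁ : ∫⁻ ζ in F, ∫⁻ x, Γ (x, t) ζ ∂(volume : Measure (Vec N)) ∂μ₁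
      = ∫⁻ x, ∫⁻ ζ in F, Γ (x, t) ζ ∂μ₁ ∂(volume : Measure (Vec N)) :=
    (lintegral_lintegral_swap hmeas.aemeasurable).symm
  have hswap₂ : ∫⁻ x, ∫⁻ ζ in F, Γ (x, t) ζ ∂μ₂ ∂(volume : Measure (Vec N))
      = ∫⁻ ζ in F, ∫⁻ x, Γ (x, t) ζ ∂(volume : Measure (Vec N)) ∂μ₂ :=
    lintegral_lintegral_swap hmeas.aemeasurable
  -- points (x, t) lie in strip \ F
  have hzt : ∀ x : Vec N, (x, t) ∈ strip N T₁ T₂ \ F := by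
    intro x
    refine ⟨⟨ht₁, ht₂⟩, fun hmem => ?_⟩
    exact lt_irrefl t (hFt (x, t) hmem)
  -- main chain
  have key : ENNReal.ofReal (1 / (β * Λ)) * μ₁ F ≤ ENNReal.ofReal (β * Λ) * μ₂ F := by
    calc ENNReal.ofReal (1 / (β * Λ)) * μ₁ F
        = ∫⁻ _ in F, ENNReal.ofReal (1 / (β * Λ)) ∂μ₁ := by
          rw [setLIntegral_const, mul_comm]
      _ ≤ ∫⁻ ζ in F, ∫⁻ x, Γ (x, t) ζ ∂(volume : Measure (Vec N)) ∂μ₁ := by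
          refine setLIntegral_mono (hmeas.lintegral_prod_left) ?_
          exact fun ζ hζ => hlow ζ hζ
      _ = ∫⁻ x, ∫⁻ ζ in F, Γ (x, t) ζ ∂μ₁ ∂(volume : Measure (Vec N)) := hswap₁
      _ ≤ ∫⁻ x, ∫⁻ ζ in F, Γ (x, t) ζ ∂μ₂ ∂(volume : Measure (Vec N)) :=
          lintegral_mono fun x => hcomp (x, t) (hzt x)
      _ = ∫⁻ ζ in F, ∫⁻ x, Γ (x, t) ζ ∂(volume : Measure (Vec N)) ∂μ₂ := hswap₂
      _ ≤ ∫⁻ _ in F, ENNReal.ofReal (β * Λ) ∂μ₂ := by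
          refine setLIntegral_mono measurable_const ?_
          exact fun ζ hζ => hup ζ hζ
      _ = ENNReal.ofReal (β * Λ) * μ₂ F := by
          rw [setLIntegral_const, mul_comm]
  have hinv : ENNReal.ofReal (β * Λ) * ENNReal.ofReal (1 / (β * Λ)) = 1 := by
    rw [← ENNReal.ofReal_mul hβΛ.le, mul_one_div, div_self hβΛ.ne', ENNReal.ofReal_one]
  calc μ₁ F = ENNReal.ofReal (β * Λ) * (ENNReal.ofReal (1 / (β * Λ)) * μ₁ F) := by
        rw [← mul_assoc, hinv, one_mul]
    _ ≤ ENNReal.ofReal (β * Λ) * (ENNReal.ofReal (β * Λ) * μ₂ F) := by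
        exact mul_le_mul_right key _
    _ = ENNReal.ofReal ((β * Λ) ^ 2) * μ₂ F := by
        rw [← mul_assoc, ← ENNReal.ofReal_mul hβΛ.le, ← sq]
end

section
/- Fix a>0. There exists a constant c>0, depending only on a and the doubling constant c_d (and independent of A and τ), such that for every compact set A ⊂ ℝ^N and every τ∈(T₁,T₂), one has |A| ≤ c·C_a(A×{τ}). (Indeed, the Lebesgue measure on the time slice A×{τ} satisfies ∫ G_a(z,ζ)dν(ζ) ≤ β for all z∈S for a constant β=β(a,c_d), so ν/β is admissible for the capacity.) -/
open MeasureTheory Set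
open scoped ENNReal NNReal

/-!
Push Lebesgue measure on `A` forward to the slice `A × {τ}`. Its Gaussian potential at
`z = (x, t)` is at most `|B(x, √(t - τ))|⁻¹ ∫ exp (-a d(x, ξ)² / (t - τ)) dξ`; splitting `ℝ^N`
into the dyadic `d`-annuli around `x` and iterating the doubling inequality bounds this by
`β = 1 + ∑ c_d^(j+1) exp (-a 4^j)`, so the pushforward divided by `β` is admissible for the
capacity.
-/

/-- The constant `β(a, c_d)` of the informal statement. -/
noncomputable def gaussianDoublingConst (a cd : ℝ) : ℝ :=
  1 + ∑' j : ℕ, cd ^ (j + 1) * Real.exp (-a * 4 ^ j)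

open Filter in
theorem summable_pow_mul_exp_neg_mul_four_pow {a c : ℝ} (ha : 0 < a) (hc : 0 < c) :
    Summable fun j : ℕ => c ^ (j + 1) * Real.exp (-a * 4 ^ j) := by
  refine summable_of_ratio_test_tendsto_lt_one zero_lt_one
    (Eventually.of_forall fun j => by positivity) ?_
  have hratio : ∀ j : ℕ, ‖c ^ (j + 1 + 1) * Real.exp (-a * 4 ^ (j + 1))‖ /
      ‖c ^ (j + 1) * Real.exp (-a * 4 ^ j)‖ = c * Real.exp (-(3 * a) * 4 ^ j) := by
    intro j
    rw [Real.norm_of_nonneg (by positivity), Real.norm_of_nonneg (by positivity),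
      div_eq_iff (by positivity), show -a * 4 ^ (j + 1) = -(3 * a) * 4 ^ j + -a * 4 ^ j by ring,
      Real.exp_add]
    ring
  simp_rw [hratio]
  have h4 : Tendsto (fun j : ℕ => -(3 * a) * 4 ^ j) atTop atBot :=
    (tendsto_pow_atTop_atTop_of_one_lt (by norm_num)).const_mul_atTop_of_neg (by linarith)
  simpa using (Real.tendsto_exp_atBot.comp h4).const_mul c

theorem gaussianDoublingConst_pos {a cd : ℝ} (hcd : 0 < cd) : 0 < gaussianDoublingConst a cd :=
  add_pos_of_pos_of_nonneg one_pos (tsum_nonneg fun j => by positivity)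

theorem le_mul_capac_of_potential_le {α : Type*} [TopologicalSpace α] [MeasurableSpace α]
    {X F : Set α} {K : α → α → ℝ≥0∞} (μ : Measure α) [μ.InnerRegular]
    [IsLocallyFiniteMeasure μ] (hF : μ Fᶜ = 0) {β : ℝ≥0} (hβ : β ≠ 0)
    (hpot : ∀ z ∈ X, ∫⁻ ζ, K z ζ ∂μ ≤ β) :
    μ F ≤ β * capac X K F := by
  have hadm : ∀ z ∈ X, ∫⁻ ζ, K z ζ ∂(β⁻¹ • μ) ≤ 1 := fun z hz => by
    rw [lintegral_smul_measure, ENNReal.smul_def, smul_eq_mul, ENNReal.coe_inv hβ]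
    calc _ ≤ (β : ℝ≥0∞)⁻¹ * β := mul_le_mul_right (hpot z hz) _
      _ = 1 := ENNReal.inv_mul_cancel (by simpa using hβ) ENNReal.coe_ne_top
  calc μ F = β * (β⁻¹ • μ) F := by
        rw [Measure.smul_apply, ENNReal.smul_def, smul_eq_mul, ENNReal.coe_inv hβ, ← mul_assoc,
          ENNReal.mul_inv_cancel (by simpa using hβ) ENNReal.coe_ne_top, one_mul]
    _ ≤ β * capac X K F := by
        gcongr
        exact le_iSup₂_of_le (β⁻¹ • μ) ⟨inferInstance, inferInstance, by simp [hF], hadm⟩ le_rfl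

section Metric

variable {N : ℕ} {d : Vec N → Vec N → ℝ}

theorem GoodMetric.isOpen_dBall (hd : GoodMetric d) (x : Vec N) (r : ℝ) :
    IsOpen (dBall d x r) :=
  isOpen_lt (hd.cont.comp (continuous_const.prodMk continuous_id)) continuous_const

theorem GoodMetric.volume_dBall_pos (hd : GoodMetric d) (x : Vec N) {r : ℝ} (hr : 0 < r) :
    0 < volume (dBall d x r) :=
  (hd.isOpen_dBall x r).measure_pos volume ⟨x, by simp [dBall, (hd.eq_zero_iff x x).2 rfl, hr]⟩

theorem Doubling.volume_dBall_two_pow_mul_le {cd : ℝ} (hD : Doubling d cd) (x : Vec N)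
    {r : ℝ} (hr : 0 < r) (j : ℕ) :
    volume (dBall d x (2 ^ j * r)) ≤ ENNReal.ofReal cd ^ j * volume (dBall d x r) := by
  induction j with
  | zero => simp
  | succ j ih =>
    calc volume (dBall d x (2 ^ (j + 1) * r))
        = volume (dBall d x (2 * (2 ^ j * r))) := by rw [pow_succ, mul_comm _ (2 : ℝ), mul_assoc]
      _ ≤ ENNReal.ofReal cd * volume (dBall d x (2 ^ j * r)) := hD x _ (by positivity)
      _ ≤ ENNReal.ofReal cd * (ENNReal.ofReal cd ^ j * volume (dBall d x r)) := by gcongr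
      _ = ENNReal.ofReal cd ^ (j + 1) * volume (dBall d x r) := by rw [pow_succ']; ring

/-- On the dyadic annulus `2^i r ≤ d(x, ξ) < 2^(i+1) r` the Gaussian is at most `exp(-a 4^i)`. -/
theorem ofReal_exp_neg_sq_div_le_tsum_indicator {a : ℝ} (ha : 0 ≤ a) (x ξ : Vec N) {r : ℝ}
    (hr : 0 < r) :
    ENNReal.ofReal (Real.exp (-a * d x ξ ^ 2 / r ^ 2)) ≤
      (dBall d x r).indicator 1 ξ +
        ∑' i : ℕ, ENNReal.ofReal (Real.exp (-a * 4 ^ i)) *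
          (dBall d x (2 ^ (i + 1) * r)).indicator 1 ξ := by
  by_cases hξ : d x ξ < r
  · have hle : ENNReal.ofReal (Real.exp (-a * d x ξ ^ 2 / r ^ 2)) ≤ 1 :=
      ENNReal.ofReal_le_one.2 <| Real.exp_le_one_iff.2 <|
        div_nonpos_of_nonpos_of_nonneg (by nlinarith [sq_nonneg (d x ξ)]) (sq_nonneg r)
    simpa [indicator_of_mem (show ξ ∈ dBall d x r from hξ)] using le_add_right hle
  · obtain ⟨i, hi_le, hi_lt⟩ := exists_nat_pow_near (x := d x ξ / r) (y := (2 : ℝ))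
      ((one_le_div hr).2 (not_lt.1 hξ)) one_lt_two
    have hmem : ξ ∈ dBall d x (2 ^ (i + 1) * r) := (div_lt_iff₀ hr).1 hi_lt
    have hexp : Real.exp (-a * d x ξ ^ 2 / r ^ 2) ≤ Real.exp (-a * 4 ^ i) := by
      have hsq : (4 : ℝ) ^ i ≤ (d x ξ / r) ^ 2 := by
        calc (4 : ℝ) ^ i = (2 ^ i) ^ 2 := by rw [← pow_mul, mul_comm, pow_mul]; norm_num
          _ ≤ (d x ξ / r) ^ 2 := pow_le_pow_left₀ (by positivity) hi_le 2
      rw [Real.exp_le_exp, mul_div_assoc, ← div_pow]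
      exact mul_le_mul_of_nonpos_left hsq (neg_nonpos.2 ha)
    calc ENNReal.ofReal (Real.exp (-a * d x ξ ^ 2 / r ^ 2))
        ≤ ENNReal.ofReal (Real.exp (-a * 4 ^ i)) *
            (dBall d x (2 ^ (i + 1) * r)).indicator 1 ξ := by
          simpa [indicator_of_mem hmem] using ENNReal.ofReal_le_ofReal hexp
      _ ≤ _ := ENNReal.le_tsum (f := fun i : ℕ => ENNReal.ofReal (Real.exp (-a * 4 ^ i)) *
            (dBall d x (2 ^ (i + 1) * r)).indicator 1 ξ) i
      _ ≤ _ := le_add_self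

theorem lintegral_exp_neg_sq_div_le {a cd : ℝ} (hd : GoodMetric d) (hD : Doubling d cd)
    (ha : 0 < a) (hcd : 0 < cd) (x : Vec N) {r : ℝ} (hr : 0 < r) :
    ∫⁻ ξ, ENNReal.ofReal (Real.exp (-a * d x ξ ^ 2 / r ^ 2)) ≤
      ENNReal.ofReal (gaussianDoublingConst a cd) * volume (dBall d x r) := by
  have hmeas : ∀ ρ, MeasurableSet (dBall d x ρ) := fun ρ => (hd.isOpen_dBall x ρ).measurableSet
  calc ∫⁻ ξ, ENNReal.ofReal (Real.exp (-a * d x ξ ^ 2 / r ^ 2))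
      ≤ ∫⁻ ξ, ((dBall d x r).indicator 1 ξ +
          ∑' i : ℕ, ENNReal.ofReal (Real.exp (-a * 4 ^ i)) *
            (dBall d x (2 ^ (i + 1) * r)).indicator 1 ξ) :=
        lintegral_mono fun ξ => ofReal_exp_neg_sq_div_le_tsum_indicator ha.le x ξ hr
    _ = volume (dBall d x r) + ∑' i : ℕ, ENNReal.ofReal (Real.exp (-a * 4 ^ i)) *
          volume (dBall d x (2 ^ (i + 1) * r)) := by
        rw [lintegral_add_left (measurable_one.indicator (hmeas r)),
          lintegral_tsum fun i => ((measurable_one.indicator (hmeas _)).const_mul _).aemeasurable]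
        simp_rw [lintegral_const_mul _ (measurable_one.indicator (hmeas _)),
          lintegral_indicator_one (hmeas _)]
    _ ≤ volume (dBall d x r) + ∑' i : ℕ, ENNReal.ofReal (Real.exp (-a * 4 ^ i)) *
          (ENNReal.ofReal cd ^ (i + 1) * volume (dBall d x r)) := by
        gcongr with i
        exact hD.volume_dBall_two_pow_mul_le x hr (i + 1)
    _ = ENNReal.ofReal (gaussianDoublingConst a cd) * volume (dBall d x r) := by
        rw [gaussianDoublingConst,
          ENNReal.ofReal_add zero_le_one (tsum_nonneg fun j => by positivity),
          ENNReal.ofReal_tsum_of_nonneg (fun j => by positivity)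
            (summable_pow_mul_exp_neg_mul_four_pow ha hcd),
          ENNReal.ofReal_one, add_mul, one_mul, ← ENNReal.tsum_mul_right]
        congr 2 with i
        rw [ENNReal.ofReal_mul (by positivity), ENNReal.ofReal_pow hcd.le]
        ring

theorem lintegral_gaussK_slice_le {a cd : ℝ} (hd : GoodMetric d) (hD : Doubling d cd)
    (ha : 0 < a) (hcd : 0 < cd) (z : Vec N × ℝ) (τ : ℝ) :
    ∫⁻ ξ, gaussK d a z (ξ, τ) ≤ ENNReal.ofReal (gaussianDoublingConst a cd) := by
  by_cases hτ : τ < z.2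
  · simp only [gaussK, hτ, if_true]
    have hs : 0 < Real.sqrt (z.2 - τ) := Real.sqrt_pos.2 (sub_pos.2 hτ)
    have hV0 := (hd.volume_dBall_pos z.1 hs).ne'
    have hVtop := ((hd.bounded z.1 (Real.sqrt (z.2 - τ))).measure_lt_top (μ := volume)).ne
    have hbound := lintegral_exp_neg_sq_div_le hd hD ha hcd z.1 hs
    rw [Real.sq_sqrt (sub_pos.2 hτ).le] at hbound
    rw [lintegral_const_mul' _ _ (ENNReal.inv_ne_top.2 hV0)]
    calc _ ≤ _ := mul_le_mul_right hbound _
      _ = _ := by rw [mul_comm, mul_assoc, ENNReal.mul_inv_cancel hV0 hVtop, mul_one]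
  · simp [gaussK, hτ]

theorem volume_le_mul_capac_slice {a cd : ℝ} (hd : GoodMetric d) (hD : Doubling d cd)
    (ha : 0 < a) (hcd : 0 < cd) (X : Set (Vec N × ℝ)) {A : Set (Vec N)} (hA : IsCompact A) (τ : ℝ) :
    volume A ≤ ENNReal.ofReal (gaussianDoublingConst a cd) *
      capac X (gaussK d a) (A ×ˢ ({τ} : Set ℝ)) := by
  have hf : Measurable fun ξ : Vec N => (ξ, τ) := measurable_id.prodMk measurable_const
  have hAm : MeasurableSet A := hA.isClosed.measurableSet
  have hFm : MeasurableSet (A ×ˢ ({τ} : Set ℝ)) := hAm.prod (measurableSet_singleton τ)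
  have hpre : (fun ξ : Vec N => (ξ, τ)) ⁻¹' (A ×ˢ {τ}) = A := by ext; simp
  have : IsFiniteMeasure (volume.restrict A) := isFiniteMeasure_restrict.2 hA.measure_lt_top.ne
  set μ := (volume.restrict A).map fun ξ : Vec N => (ξ, τ)
  have hμF : μ (A ×ˢ {τ}) = volume A := by
    rw [Measure.map_apply hf hFm, hpre, Measure.restrict_apply_self]
  have hμFc : μ (A ×ˢ {τ})ᶜ = 0 := by
    rw [Measure.map_apply hf hFm.compl, preimage_compl, hpre, Measure.restrict_apply hAm.compl,
      compl_inter_self, measure_empty]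
  have hpot : ∀ z ∈ X, ∫⁻ ζ, gaussK d a z ζ ∂μ ≤ ENNReal.ofReal (gaussianDoublingConst a cd) :=
    fun z _ => (lintegral_map_le _ _).trans <|
      (setLIntegral_le_lintegral _ _).trans (lintegral_gaussK_slice_le hd hD ha hcd z τ)
  rw [← hμF]
  exact le_mul_capac_of_potential_le μ hμFc
    (by simpa using gaussianDoublingConst_pos (a := a) hcd) hpot

end Metric

/-- Lower bound of the Gaussian capacity of a time slice `A × {τ}` by the Lebesgue
measure of `A` (Proposition 2.6 (i) of the paper). -/
theorem stmt2 (a cd : ℝ) (ha : 0 < a) (hcd : 1 < cd) :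
    ∃ c : ℝ, 0 < c ∧
      ∀ (N : ℕ), 1 ≤ N → ∀ d : Vec N → Vec N → ℝ, GoodMetric d → Doubling d cd →
      ∀ T₁ T₂ : EReal, T₁ < T₂ →
      ∀ A : Set (Vec N), IsCompact A →
      ∀ τ : ℝ, T₁ < (τ : EReal) → (τ : EReal) < T₂ →
      volume A ≤ ENNReal.ofReal c *
        capac (strip N T₁ T₂) (gaussK d a) (A ×ˢ ({τ} : Set ℝ)) := by
  have hcd₀ : 0 < cd := zero_lt_one.trans hcd
  refine ⟨gaussianDoublingConst a cd, gaussianDoublingConst_pos hcd₀, ?_⟩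
  intro N _ d hd hD T₁ T₂ _ A hA τ _ _
  exact volume_le_mul_capac_slice hd hD ha hcd₀ _ hA τ
end

section
/- Assume Ω satisfies the exterior d-cone condition at z₀=(x₀,t₀)∈∂Ω with constants M₀,r₀,θ>0, let λ∈(0,1) with t₀−λ>T₁, let b>0, and set δ(λ) = min{r₀², λ/√(1+M₀⁴)}. Then there exists a constant c>0, depending only on θ, M₀, b and the doubling constant c_d, such that for every z∈S with 0 < d̂(z₀,z)² ≤ δ(λ) one has M_λ(z₀,z) ≥ c·( log(1/d̂(z₀,z)²) − log(1/δ(λ)) ). -/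
open MeasureTheory Set
open scoped ENNReal NNReal

/-- Exterior `d`-cone condition at `z₀ = (x₀,t₀)`:
`|{x ∈ closure B(x₀,M₀r) : (x,t₀−r²) ∉ Ω}| ≥ θ |B(x₀,M₀r)|` for all `0 < r ≤ r₀`. -/
def ConeCond {N : ℕ} (d : Vec N → Vec N → ℝ) (Ω : Set (Vec N × ℝ)) (z₀ : Vec N × ℝ)
    (M₀ r₀ θ : ℝ) : Prop :=
  ∀ r : ℝ, 0 < r → r ≤ r₀ →
    ENNReal.ofReal θ * volume (dBall d z₀.1 (M₀ * r)) ≤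
      volume {x ∈ closure (dBall d z₀.1 (M₀ * r)) | (x, z₀.2 - r ^ 2) ∉ Ω}

/-- The function `M_λ(z₀,z)` of the paper. -/
noncomputable def Mfun {N : ℕ} (d : Vec N → Vec N → ℝ) (S Ω : Set (Vec N × ℝ)) (z₀ : Vec N × ℝ)
    (b lam : ℝ) (z : Vec N × ℝ) : ℝ≥0∞ :=
  ∫⁻ η in Set.Ioo (pdist d z₀ z ^ 2) lam,
    (∫⁻ ρ in Set.Ioi (1 : ℝ),
      volume (Eset d S Ω z₀ lam ρ (z₀.2 - η)) / volume (dBall d z₀.1 (Real.sqrt η)) *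
        ENNReal.ofReal (ρ ^ (-(1 + b)))) *
      ENNReal.ofReal η⁻¹

/-!
For `d̂(z₀,z)² < η < δ(λ)` put `r = √η`. The exterior cone condition gives a set of measure at least
`θ |B(x₀, M₀ r)|` of points `x ∈ closure B(x₀, M₀ r)` with `(x, t₀ - η) ∉ Ω`; the choice of `δ(λ)`
places all of them in `E_λ(ρ, t₀ - η)` as soon as `ρ ≥ e^{M₀²}`, and doubling bounds `|B(x₀, r)|` by
`c_d^⌈1/M₀⌉ |B(x₀, M₀ r)|`. So the inner integrand of `M_λ` is at least `θ c_d^{-⌈1/M₀⌉}` for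
`ρ ∈ (e^{M₀²}, e^{M₀²} + 1)`, and integrating `η⁻¹` over `(d̂(z₀,z)², δ(λ))` produces the logarithm.
-/

theorem dBall_mono {N : ℕ} (d : Vec N → Vec N → ℝ) (x : Vec N) {r r' : ℝ} (h : r ≤ r') :
    dBall d x r ⊆ dBall d x r' :=
  fun _ hy => lt_of_lt_of_le hy h

namespace GoodMetric

variable {N : ℕ} {d : Vec N → Vec N → ℝ}

theorem continuous_apply_left (hd : GoodMetric d) (x : Vec N) : Continuous (d x) :=
  hd.cont.comp (Continuous.prodMk_right x)

theorem volume_dBall_pos_s13 (hd : GoodMetric d) (x : Vec N) {r : ℝ} (hr : 0 < r) :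
    0 < volume (dBall d x r) :=
  (isOpen_Iio.preimage (hd.continuous_apply_left x)).measure_pos volume
    ⟨x, by simpa [dBall, (hd.eq_zero_iff x x).mpr rfl] using hr⟩

theorem volume_dBall_ne_top (hd : GoodMetric d) (x : Vec N) (r : ℝ) :
    volume (dBall d x r) ≠ ⊤ :=
  (hd.bounded x r).measure_lt_top.ne

theorem closure_dBall_subset (hd : GoodMetric d) (x : Vec N) (r : ℝ) :
    closure (dBall d x r) ⊆ {y | d x y ≤ r} :=
  closure_minimal (fun _ hy => le_of_lt (show d x _ < r from hy))
    (isClosed_Iic.preimage (hd.continuous_apply_left x))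

end GoodMetric

namespace Doubling

variable {N : ℕ} {d : Vec N → Vec N → ℝ} {cd : ℝ}

theorem volume_dBall_two_pow_mul_le_s13 (hD : Doubling d cd) (k : ℕ) (x : Vec N) {r : ℝ}
    (hr : 0 < r) :
    volume (dBall d x (2 ^ k * r)) ≤ ENNReal.ofReal cd ^ k * volume (dBall d x r) := by
  induction k generalizing r with
  | zero => simp
  | succ k ih =>
    calc volume (dBall d x (2 ^ (k + 1) * r)) = volume (dBall d x (2 ^ k * (2 * r))) := by
          ring_nf
      _ ≤ ENNReal.ofReal cd ^ k * volume (dBall d x (2 * r)) := ih (by positivity)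
      _ ≤ ENNReal.ofReal cd ^ k * (ENNReal.ofReal cd * volume (dBall d x r)) := by
          gcongr
          exact hD x r hr
      _ = ENNReal.ofReal cd ^ (k + 1) * volume (dBall d x r) := by ring

theorem volume_dBall_le_pow_mul_volume_dBall (hD : Doubling d cd) (x : Vec N) {M r : ℝ}
    (hM : 0 < M) (hr : 0 < r) :
    volume (dBall d x r) ≤ ENNReal.ofReal cd ^ ⌈1 / M⌉₊ * volume (dBall d x (M * r)) := by
  set n := ⌈1 / M⌉₊
  have hn : 1 ≤ 2 ^ n * M := calc
    1 ≤ n * M := (div_le_iff₀ hM).mp (Nat.le_ceil _)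
    _ ≤ 2 ^ n * M := by gcongr; exact_mod_cast n.lt_two_pow_self.le
  calc volume (dBall d x r) ≤ volume (dBall d x (2 ^ n * (M * r))) :=
        measure_mono (dBall_mono d x (by nlinarith))
    _ ≤ _ := hD.volume_dBall_two_pow_mul_le_s13 n x (by positivity)

end Doubling

theorem one_le_sqrt_one_add_pow_four (M : ℝ) : 1 ≤ √(1 + M ^ 4) :=
  Real.one_le_sqrt.mpr (le_add_of_nonneg_right (by positivity))

section ExteriorSection

variable {N : ℕ} {d : Vec N → Vec N → ℝ}

theorem pdist_le_sqrt_of_sq_le {z₀ : Vec N × ℝ} {x : Vec N} {M η lam : ℝ}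
    (hx : d z₀.1 x ^ 2 ≤ M ^ 2 * η) (hη : 0 ≤ η) (hlam : η * √(1 + M ^ 4) ≤ lam) :
    pdist d z₀ (x, z₀.2 - η) ≤ √lam := by
  have hlam0 : 0 ≤ lam := le_trans (by positivity) hlam
  have hη2 : η ^ 2 * (1 + M ^ 4) ≤ lam ^ 2 := by
    have := pow_le_pow_left₀ (by positivity) hlam 2
    rwa [mul_pow, Real.sq_sqrt (by positivity)] at this
  have hx4 : (d z₀.1 x ^ 2) ^ 2 ≤ (M ^ 2 * η) ^ 2 := pow_le_pow_left₀ (sq_nonneg _) hx 2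
  calc pdist d z₀ (x, z₀.2 - η) = (d z₀.1 x ^ 4 + η ^ 2) ^ (1 / 4 : ℝ) := by
        simp only [pdist, sub_sub_cancel]
    _ ≤ (lam ^ 2) ^ (1 / 4 : ℝ) := by gcongr; nlinarith
    _ = √lam := by
        rw [Real.sqrt_eq_rpow, ← Real.rpow_natCast, ← Real.rpow_mul hlam0]
        norm_num

theorem mem_Eset_of_sq_le {T₁ T₂ : EReal} {Ω : Set (Vec N × ℝ)} {z₀ : Vec N × ℝ} {x : Vec N}
    {M lam ρ η : ℝ} (hz₀ : z₀ ∈ strip N T₁ T₂) (hT₁ : T₁ < ((z₀.2 - lam : ℝ) : EReal))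
    (hxΩ : (x, z₀.2 - η) ∉ Ω) (hx : d z₀.1 x ^ 2 ≤ M ^ 2 * η) (hη : 0 < η)
    (hlam : η * √(1 + M ^ 4) ≤ lam) (hρ : Real.exp (M ^ 2) ≤ ρ) :
    x ∈ Eset d (strip N T₁ T₂) Ω z₀ lam ρ (z₀.2 - η) := by
  have hηlam : η ≤ lam := (le_mul_of_one_le_right hη.le (one_le_sqrt_one_add_pow_four M)).trans hlam
  refine ⟨⟨⟨?_, ?_⟩, hxΩ⟩, pdist_le_sqrt_of_sq_le hx hη.le hlam, ?_⟩
  · exact hT₁.trans_le (EReal.coe_le_coe_iff.mpr (by linarith))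
  · exact (EReal.coe_lt_coe_iff.mpr (by linarith)).trans hz₀.2
  · rw [sub_sub_cancel]
    exact (Real.exp_le_exp.mpr ((div_le_iff₀ hη).mpr hx)).trans hρ

theorem ConeCond.ofReal_div_le_volume_Eset_div {T₁ T₂ : EReal} {Ω : Set (Vec N × ℝ)}
    {z₀ : Vec N × ℝ} {M₀ r₀ θ cd lam η ρ : ℝ} (hcone : ConeCond d Ω z₀ M₀ r₀ θ)
    (hd : GoodMetric d) (hD : Doubling d cd) (hcd : 0 < cd) (hM₀ : 0 < M₀) (hr₀ : 0 ≤ r₀)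
    (hz₀ : z₀ ∈ strip N T₁ T₂) (hT₁ : T₁ < ((z₀.2 - lam : ℝ) : EReal)) (hη : 0 < η)
    (hηr₀ : η ≤ r₀ ^ 2) (hηlam : η * √(1 + M₀ ^ 4) ≤ lam) (hρ : Real.exp (M₀ ^ 2) ≤ ρ) :
    ENNReal.ofReal (θ / cd ^ ⌈1 / M₀⌉₊) ≤
      volume (Eset d (strip N T₁ T₂) Ω z₀ lam ρ (z₀.2 - η)) / volume (dBall d z₀.1 √η) := by
  set r := √η
  have hr : 0 < r := Real.sqrt_pos.mpr hη
  have hr2 : r ^ 2 = η := Real.sq_sqrt hη.le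
  have hsub : {x ∈ closure (dBall d z₀.1 (M₀ * r)) | (x, z₀.2 - r ^ 2) ∉ Ω} ⊆
      Eset d (strip N T₁ T₂) Ω z₀ lam ρ (z₀.2 - η) := by
    rintro x ⟨hxB, hxΩ⟩
    rw [hr2] at hxΩ
    refine mem_Eset_of_sq_le hz₀ hT₁ hxΩ ?_ hη hηlam hρ
    calc d z₀.1 x ^ 2 ≤ (M₀ * r) ^ 2 :=
          pow_le_pow_left₀ (hd.nonneg _ _) (hd.closure_dBall_subset _ _ hxB) 2
      _ = M₀ ^ 2 * η := by rw [mul_pow, hr2]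
  rw [ENNReal.le_div_iff_mul_le (Or.inl (hd.volume_dBall_pos_s13 _ hr).ne')
    (Or.inl (hd.volume_dBall_ne_top _ _))]
  calc ENNReal.ofReal (θ / cd ^ ⌈1 / M₀⌉₊) * volume (dBall d z₀.1 r)
      ≤ ENNReal.ofReal (θ / cd ^ ⌈1 / M₀⌉₊) *
          (ENNReal.ofReal cd ^ ⌈1 / M₀⌉₊ * volume (dBall d z₀.1 (M₀ * r))) := by
        gcongr
        exact hD.volume_dBall_le_pow_mul_volume_dBall _ hM₀ hr
    _ = ENNReal.ofReal θ * volume (dBall d z₀.1 (M₀ * r)) := by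
        rw [← mul_assoc, ← ENNReal.ofReal_pow hcd.le, ← ENNReal.ofReal_mul' (by positivity),
          div_mul_cancel₀ _ (by positivity)]
    _ ≤ _ := hcone r hr (Real.sqrt_le_iff.mpr ⟨hr₀, hηr₀⟩)
    _ ≤ _ := measure_mono hsub

end ExteriorSection

theorem le_setLIntegral_Ioi_one_mul_rpow {f : ℝ → ℝ≥0∞} {A : ℝ≥0∞} {ρ₀ β : ℝ} (hρ₀ : 1 ≤ ρ₀)
    (hβ : 0 ≤ β) (hf : ∀ ρ, ρ₀ ≤ ρ → A ≤ f ρ) :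
    A * ENNReal.ofReal ((ρ₀ + 1) ^ (-β)) ≤
      ∫⁻ ρ in Ioi (1 : ℝ), f ρ * ENNReal.ofReal (ρ ^ (-β)) := by
  calc A * ENNReal.ofReal ((ρ₀ + 1) ^ (-β))
      = ∫⁻ _ in Ioo ρ₀ (ρ₀ + 1), A * ENNReal.ofReal ((ρ₀ + 1) ^ (-β)) := by simp
    _ ≤ ∫⁻ ρ in Ioo ρ₀ (ρ₀ + 1), f ρ * ENNReal.ofReal (ρ ^ (-β)) :=
        setLIntegral_mono' measurableSet_Ioo fun ρ hρ =>
          mul_le_mul' (hf ρ hρ.1.le) (ENNReal.ofReal_le_ofReal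
            (Real.rpow_le_rpow_of_nonpos (by linarith [hρ.1]) hρ.2.le (neg_nonpos.mpr hβ)))
    _ ≤ _ := lintegral_mono_set fun ρ hρ => hρ₀.trans_lt hρ.1

theorem setLIntegral_Ioo_ofReal_inv {s δ : ℝ} (hs : 0 < s) (hsδ : s ≤ δ) :
    ∫⁻ η in Ioo s δ, ENNReal.ofReal η⁻¹ = ENNReal.ofReal (Real.log δ - Real.log s) := by
  have hint : IntegrableOn (fun η : ℝ => η⁻¹) (Ioo s δ) :=
    ((continuousOn_inv₀.mono fun η hη => (hs.trans_le hη.1).ne').integrableOn_compact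
      isCompact_Icc).mono_set Ioo_subset_Icc_self
  rw [← ofReal_integral_eq_lintegral_ofReal hint ((ae_restrict_iff' measurableSet_Ioo).mpr
      (ae_of_all _ fun η hη => inv_nonneg.mpr (hs.trans hη.1).le)),
    ← integral_Ioc_eq_integral_Ioo, ← intervalIntegral.integral_of_le hsδ,
    integral_inv_of_pos hs (hs.trans_le hsδ), Real.log_div (hs.trans_le hsδ).ne' hs.ne']

theorem ofReal_mul_log_sub_le_setLIntegral_mul_inv {F : ℝ → ℝ≥0∞} {a s δ lam : ℝ}
    (hs : 0 < s) (hsδ : s ≤ δ) (hδ : δ ≤ lam) (hF : ∀ η ∈ Ioo s δ, ENNReal.ofReal a ≤ F η) :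
    ENNReal.ofReal (a * (Real.log δ - Real.log s)) ≤
      ∫⁻ η in Ioo s lam, F η * ENNReal.ofReal η⁻¹ := by
  have hlog : 0 ≤ Real.log δ - Real.log s := sub_nonneg.mpr (Real.log_le_log hs hsδ)
  calc ENNReal.ofReal (a * (Real.log δ - Real.log s))
      = ∫⁻ η in Ioo s δ, ENNReal.ofReal a * ENNReal.ofReal η⁻¹ := by
        rw [lintegral_const_mul' _ _ ENNReal.ofReal_ne_top, setLIntegral_Ioo_ofReal_inv hs hsδ,
          ENNReal.ofReal_mul' hlog]
    _ ≤ ∫⁻ η in Ioo s δ, F η * ENNReal.ofReal η⁻¹ :=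
        setLIntegral_mono' measurableSet_Ioo fun η hη => mul_le_mul_left (hF η hη) _
    _ ≤ _ := lintegral_mono_set (Ioo_subset_Ioo_right hδ)

/-- Under the exterior `d`-cone condition, the quantity `M_λ(z₀,z)` grows
logarithmically as `z → z₀` (proof of Theorem 5.2 of the paper). -/
theorem stmt13 (θ M₀ b cd : ℝ) (hθ : 0 < θ) (hM₀ : 0 < M₀) (hb : 0 < b)
    (hcd : 1 < cd) :
    ∃ c : ℝ, 0 < c ∧
      ∀ (N : ℕ), 1 ≤ N → ∀ d : Vec N → Vec N → ℝ, GoodMetric d → Doubling d cd →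
      ∀ T₁ T₂ : EReal, T₁ < T₂ →
      ∀ Ω : Set (Vec N × ℝ), IsOpen Ω → Bornology.IsBounded Ω →
        closure Ω ⊆ strip N T₁ T₂ →
      ∀ z₀ : Vec N × ℝ, z₀ ∈ frontier Ω →
      ∀ r₀ : ℝ, 0 < r₀ → ConeCond d Ω z₀ M₀ r₀ θ →
      ∀ lam : ℝ, lam ∈ Set.Ioo 0 1 → T₁ < ((z₀.2 - lam : ℝ) : EReal) →
      ∀ z : Vec N × ℝ, z ∈ strip N T₁ T₂ → 0 < pdist d z₀ z →
        pdist d z₀ z ^ 2 ≤ min (r₀ ^ 2) (lam / Real.sqrt (1 + M₀ ^ 4)) →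
        ENNReal.ofReal (c * (Real.log (1 / pdist d z₀ z ^ 2) -
            Real.log (1 / min (r₀ ^ 2) (lam / Real.sqrt (1 + M₀ ^ 4))))) ≤
          Mfun d (strip N T₁ T₂) Ω z₀ b lam z := by
  have hcd0 : 0 < cd := one_pos.trans hcd
  refine ⟨θ / cd ^ ⌈1 / M₀⌉₊ * (Real.exp (M₀ ^ 2) + 1) ^ (-(1 + b)), by positivity, ?_⟩
  intro N _ d hd hD T₁ T₂ _ Ω _ _ hΩS z₀ hz₀ r₀ hr₀ hcone lam hlam hT₁ z _ hz hzδ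
  have hδlam : min (r₀ ^ 2) (lam / √(1 + M₀ ^ 4)) ≤ lam :=
    (min_le_right _ _).trans (div_le_self hlam.1.le (one_le_sqrt_one_add_pow_four M₀))
  rw [one_div (pdist d z₀ z ^ 2), one_div (min _ _), Real.log_inv, Real.log_inv, neg_sub_neg]
  refine ofReal_mul_log_sub_le_setLIntegral_mul_inv (by positivity) hzδ hδlam fun η hη => ?_
  rw [ENNReal.ofReal_mul (by positivity)]
  refine le_setLIntegral_Ioi_one_mul_rpow (Real.one_le_exp (by positivity)) (by positivity)
    fun ρ hρ => ?_
  exact hcone.ofReal_div_le_volume_Eset_div hd hD hcd0 hM₀ hr₀.le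
    (hΩS (frontier_subset_closure hz₀)) hT₁ ((pow_pos hz 2).trans hη.1)
    (hη.2.le.trans (min_le_left _ _))
    ((le_div_iff₀ (by positivity)).mp (hη.2.le.trans (min_le_right _ _))) hρ
end

section
/- Let X be a Hausdorff locally compact topological space and let K : X×X → [0,+∞] be lower semicontinuous with K(·,ζ) not identically zero for each ζ∈X. Then for every compact set F⊆X one has C_K(F) < ∞. -/
/-! Each `ζ ∈ F` has a witness `z` with `K z ζ > c > 0`; by lower semicontinuity the superlevel
set `{K z · > c}` is an open neighbourhood of `ζ`, and any admissible `μ` gives it mass at most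
`c⁻¹` (Markov's inequality against `∫⁻ K z · dμ ≤ 1`). Finitely many of these sets cover `F`. -/

open MeasureTheory Set
open scoped ENNReal

noncomputable section

/-- Capacity of `F` with respect to the kernel `K`: supremum of total masses of
nonnegative Radon measures supported in `F` whose `K`-potential is `≤ 1` on `X`. -/
def genCapac {X : Type*} [TopologicalSpace X] [MeasurableSpace X]
    (K : X → X → ℝ≥0∞) (F : Set X) : ℝ≥0∞ :=
  ⨆ (μ : Measure X) (_ : μ.InnerRegular ∧ IsLocallyFiniteMeasure μ ∧ μ Fᶜ = 0 ∧
      ∀ z : X, ∫⁻ ζ, K z ζ ∂μ ≤ 1), μ F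

section Capacity

variable {X : Type*} [TopologicalSpace X] [MeasurableSpace X] [OpensMeasurableSpace X]

theorem measure_superlevel_le_inv_of_lintegral_le_one {μ : Measure X} {f : X → ℝ≥0∞}
    (hf : LowerSemicontinuous f) (hμ : ∫⁻ x, f x ∂μ ≤ 1) (c : ℝ≥0∞) :
    μ {x | c < f x} ≤ c⁻¹ := by
  rw [ENNReal.le_inv_iff_mul_le, mul_comm]
  calc c * μ {x | c < f x} ≤ c * μ {x | c ≤ f x} := by
        gcongr; exact le_of_lt
    _ ≤ ∫⁻ x, f x ∂μ := mul_meas_ge_le_lintegral₀ hf.measurable.aemeasurable c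
    _ ≤ 1 := hμ

theorem genCapac_le_sum_inv {K : X → X → ℝ≥0∞} (hK : ∀ z, LowerSemicontinuous (K z))
    {F : Set X} {ι : Type*} (t : Finset ι) (z : ι → X) (c : ι → ℝ≥0∞)
    (hF : F ⊆ ⋃ i ∈ t, {ζ | c i < K (z i) ζ}) :
    genCapac K F ≤ ∑ i ∈ t, (c i)⁻¹ := by
  refine iSup₂_le fun μ ⟨_, _, _, hpot⟩ => ?_
  calc μ F ≤ μ (⋃ i ∈ t, {ζ | c i < K (z i) ζ}) := measure_mono hF
    _ ≤ ∑ i ∈ t, μ {ζ | c i < K (z i) ζ} := measure_biUnion_finset_le t _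
    _ ≤ ∑ i ∈ t, (c i)⁻¹ := Finset.sum_le_sum fun i _ =>
        measure_superlevel_le_inv_of_lintegral_le_one (hK (z i)) (hpot (z i)) (c i)

end Capacity

theorem stmt15_general {X : Type*} [TopologicalSpace X]
    [MeasurableSpace X] [BorelSpace X]
    (K : X → X → ℝ≥0∞) (hK : LowerSemicontinuous fun p : X × X => K p.1 p.2)
    (hKnz : ∀ ζ : X, ∃ z : X, K z ζ ≠ 0)
    (F : Set X) (hF : IsCompact F) :
    genCapac K F < ⊤ := by
  have hsection : ∀ z, LowerSemicontinuous (K z) := fun z =>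
    hK.comp (Continuous.prodMk_right z)
  have hwitness : ∀ ζ, ∃ z c, 0 < c ∧ c < K z ζ := fun ζ => by
    obtain ⟨z, hz⟩ := hKnz ζ
    obtain ⟨c, hc0, hcK⟩ := exists_between (pos_iff_ne_zero.mpr hz)
    exact ⟨z, c, hc0, hcK⟩
  choose z c hc0 hcK using hwitness
  obtain ⟨t, -, hcover⟩ := hF.elim_nhds_subcover (fun ζ => {ζ' | c ζ < K (z ζ) ζ'})
    fun ζ _ => ((hsection (z ζ)).isOpen_preimage (c ζ)).mem_nhds (hcK ζ)
  calc genCapac K F ≤ ∑ ζ ∈ t, (c ζ)⁻¹ := genCapac_le_sum_inv hsection t z c hcover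
    _ < ⊤ := ENNReal.sum_lt_top.mpr fun ζ _ => ENNReal.inv_lt_top.mpr (hc0 ζ)

/-- Fuglede's property (i): the capacity of a compact set with respect to a lower
semicontinuous kernel `K` with `K(·,ζ) ≢ 0` is finite. -/
theorem stmt15 {X : Type*} [TopologicalSpace X] [T2Space X] [LocallyCompactSpace X]
    [MeasurableSpace X] [BorelSpace X]
    (K : X → X → ℝ≥0∞) (hK : LowerSemicontinuous fun p : X × X => K p.1 p.2)
    (hKnz : ∀ ζ : X, ∃ z : X, K z ζ ≠ 0)
    (F : Set X) (hF : IsCompact F) :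
    genCapac K F < ⊤ :=
  stmt15_general K hK hKnz F hF

end
end

section
/- Let X be a Hausdorff locally compact topological space and let K : X×X → [0,+∞] be lower semicontinuous with K(·,ζ) not identically zero for each ζ∈X. Then for every compact set F⊆X there exists a nonnegative Radon measure μ supported in F with K∗μ(z) ≤ 1 for every z∈X and μ(F) = C_K(F); that is, the supremum defining C_K(F) is attained (by an equilibrium measure of F). -/
/-!
Admissible measures have uniformly bounded mass: `F` is covered by finitely many open sets
`{K(zᵢ, ·) > rᵢ}`, and each of them has mass at most `1 / rᵢ`. Take admissible `νₙ` with
`νₙ(F) → C_K(F)` and let `ℓ(D)` be the limit of `νₙ(D)` along an ultrafilter, for compact `D`.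
This is a content; its measure `μ` lives on `F` and `μ(F) ≥ ℓ(F) = C_K(F)`. Since
`μ(U) = sup_{D ⊆ U} ℓ(D)` for open `U`, the `μ`-integral of a staircase `∑ₖ t · 1{g > k t}`
of a lower semicontinuous `g ≥ 0` is bounded by any common bound of the `∫ g dνₙ`; Fatou's
lemma along finer staircases then bounds `∫ K(z, ·) dμ` by `1`.
-/

open MeasureTheory Set
open scoped ENNReal

noncomputable section

open Filter Topology TopologicalSpace
open scoped NNReal

section Staircase

variable {X : Type*}

def staircase (g : X → ℝ≥0∞) (t : ℝ≥0) (N : ℕ) (x : X) : ℝ≥0∞ :=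
  ∑ k ∈ Finset.Icc 1 N, {y | (k : ℝ≥0∞) * t < g y}.indicator (fun _ => (t : ℝ≥0∞)) x

lemma staircase_le (g : X → ℝ≥0∞) (t : ℝ≥0) (N : ℕ) (x : X) : staircase g t N x ≤ g x := by
  classical
  set S := (Finset.Icc 1 N).filter fun k : ℕ => (k : ℝ≥0∞) * t < g x
  have hsum : staircase g t N x = S.card * t := by
    simp [staircase, S, Set.indicator_apply, Finset.sum_ite, Finset.sum_const]
  rcases S.eq_empty_or_nonempty with hS | hS
  · simp [hsum, hS]
  have hmax := (Finset.mem_filter.1 (S.max'_mem hS)).2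
  have hcard : S.card ≤ S.max' hS := by
    calc S.card ≤ (Finset.Icc 1 (S.max' hS)).card :=
          Finset.card_le_card fun k hk =>
            Finset.mem_Icc.2 ⟨(Finset.mem_Icc.1 (Finset.mem_filter.1 hk).1).1, S.le_max' k hk⟩
      _ = S.max' hS := by simp
  calc staircase g t N x = S.card * t := hsum
    _ ≤ (S.max' hS : ℝ≥0∞) * t := by gcongr
    _ ≤ g x := hmax.le

lemma le_staircase_add {g : X → ℝ≥0∞} {x : X} {q t : ℝ≥0} {N : ℕ} (hq : q < g x) (ht : 0 < t)
    (hN : q ≤ N * t) : (q : ℝ≥0∞) ≤ staircase g t N x + t := by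
  set j := ⌊q / t⌋₊
  have hjq : j * t ≤ q := (le_div_iff₀ ht).1 (Nat.floor_le zero_le)
  have hqj : q < (j + 1) * t := (div_lt_iff₀ ht).1 (Nat.lt_floor_add_one _)
  have hjN : j ≤ N := Nat.floor_le_of_le ((div_le_iff₀ ht).2 hN)
  have hmem (k : ℕ) (hk : k ∈ Finset.Icc 1 j) : x ∈ {y | (k : ℝ≥0∞) * t < g y} := by
    have hkj : (k : ℝ≥0) ≤ j := by exact_mod_cast (Finset.mem_Icc.1 hk).2
    exact lt_of_le_of_lt (by exact_mod_cast (mul_le_mul_of_nonneg_right hkj t.2).trans hjq) hq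
  have hj : (j : ℝ≥0∞) * t ≤ staircase g t N x :=
    calc (j : ℝ≥0∞) * t = ∑ k ∈ Finset.Icc 1 j, {y | (k : ℝ≥0∞) * t < g y}.indicator
          (fun _ => (t : ℝ≥0∞)) x := by
          simp [Finset.sum_congr rfl fun k hk => indicator_of_mem (hmem k hk) _]
      _ ≤ staircase g t N x := Finset.sum_le_sum_of_subset (Finset.Icc_subset_Icc_right hjN)
  calc (q : ℝ≥0∞) ≤ ((j + 1) * t : ℝ≥0) := by exact_mod_cast hqj.le
    _ = (j : ℝ≥0∞) * t + t := by push_cast; ring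
    _ ≤ staircase g t N x + t := by gcongr

lemma le_liminf_staircase (g : X → ℝ≥0∞) (x : X) :
    g x ≤ liminf (fun n : ℕ => staircase g (n : ℝ≥0)⁻¹ (n ^ 2) x) atTop := by
  have ht : Tendsto (fun n : ℕ => (((n : ℝ≥0)⁻¹ : ℝ≥0) : ℝ≥0∞)) atTop (𝓝 0) :=
    ENNReal.tendsto_coe.2 tendsto_inv_atTop_nhds_zero_nat
  rw [← ENNReal.liminf_add_of_right_tendsto_zero ht]
  refine ENNReal.le_of_forall_nnreal_lt fun q hq => ?_
  refine le_liminf_of_le (by isBoundedDefault) ?_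
  filter_upwards [eventually_ge_atTop (max 1 ⌈q⌉₊)] with n hn
  have hn1 : (0 : ℝ≥0) < n := by exact_mod_cast (le_max_left _ _).trans hn
  refine le_staircase_add hq (inv_pos.2 hn1) ?_
  calc q ≤ n := (Nat.le_ceil q).trans (by exact_mod_cast (le_max_right _ _).trans hn)
    _ = ((n ^ 2 : ℕ) : ℝ≥0) * (n : ℝ≥0)⁻¹ := by push_cast; field_simp

variable [MeasurableSpace X]

lemma measurable_staircase {g : X → ℝ≥0∞} (hg : Measurable g) (t : ℝ≥0) (N : ℕ) :
    Measurable (staircase g t N) :=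
  Finset.measurable_sum _ fun _ _ =>
    measurable_const.indicator (measurableSet_lt measurable_const hg)

lemma lintegral_staircase {g : X → ℝ≥0∞} (hg : Measurable g) (t : ℝ≥0) (N : ℕ) (μ : Measure X) :
    ∫⁻ x, staircase g t N x ∂μ =
      ∑ k ∈ Finset.Icc 1 N, t * μ {y | (k : ℝ≥0∞) * t < g y} := by
  simp only [staircase]
  rw [lintegral_finsetSum _ fun _ _ =>
    measurable_const.indicator (measurableSet_lt measurable_const hg)]
  exact Finset.sum_congr rfl fun k _ =>
    lintegral_indicator_const (measurableSet_lt measurable_const hg) _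

lemma lintegral_le_of_forall_lintegral_staircase_le {g : X → ℝ≥0∞} (hg : Measurable g)
    {μ : Measure X} {c : ℝ≥0∞} (h : ∀ t N, ∫⁻ x, staircase g t N x ∂μ ≤ c) :
    ∫⁻ x, g x ∂μ ≤ c :=
  calc ∫⁻ x, g x ∂μ
      ≤ ∫⁻ x, liminf (fun n : ℕ => staircase g (n : ℝ≥0)⁻¹ (n ^ 2) x) atTop ∂μ :=
        lintegral_mono (le_liminf_staircase g)
    _ ≤ liminf (fun n : ℕ => ∫⁻ x, staircase g (n : ℝ≥0)⁻¹ (n ^ 2) x ∂μ) atTop :=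
        lintegral_liminf_le fun _ => measurable_staircase hg _ _
    _ ≤ c := liminf_le_of_frequently_le' (Frequently.of_forall fun _ => h _ _)

end Staircase

section LimitContent

variable {X ι : Type*} [TopologicalSpace X] [MeasurableSpace X]

lemma Ultrafilter.exists_tendsto_nnreal {α : Type*} (u : Ultrafilter ι) {f : α → ι → ℝ≥0∞}
    {B : ℝ≥0∞} (hB : B ≠ ∞) (hf : ∀ a i, f a i ≤ B) :
    ∃ ℓ : α → ℝ≥0, ∀ a, Tendsto (f a) u (𝓝 (ℓ a)) := by
  have hlim (a : α) : Tendsto (f a) u (𝓝 (u.map (f a)).lim) := (u.map (f a)).le_nhds_lim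
  have hfin (a : α) : (u.map (f a)).lim ≠ ∞ :=
    ne_top_of_le_ne_top hB (le_of_tendsto' (hlim a) (hf a))
  exact ⟨fun a => (u.map (f a)).lim.toNNReal, fun a => by
    simpa [ENNReal.coe_toNNReal (hfin a)] using hlim a⟩

variable [OpensMeasurableSpace X]

def limitContent (ν : ι → Measure X) (L : Filter ι) [L.NeBot] (ℓ : Compacts X → ℝ≥0)
    (hℓ : ∀ D : Compacts X, Tendsto (fun i => ν i D) L (𝓝 (ℓ D))) : Content X where
  toFun := ℓ
  mono' D₁ D₂ h := by
    exact_mod_cast le_of_tendsto_of_tendsto' (hℓ D₁) (hℓ D₂) fun i => measure_mono h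
  sup_disjoint' D₁ D₂ hD _ h₂ := by
    have hsum : Tendsto (fun i => ν i (D₁ ⊔ D₂ : Compacts X)) L (𝓝 (ℓ D₁ + ℓ D₂ : ℝ≥0)) := by
      simpa [measure_union hD h₂.measurableSet] using (hℓ D₁).add (hℓ D₂)
    exact_mod_cast tendsto_nhds_unique (hℓ _) hsum
  sup_le' D₁ D₂ := by
    exact_mod_cast le_of_tendsto_of_tendsto' (hℓ _) ((hℓ D₁).add (hℓ D₂))
      fun i => measure_union_le (D₁ : Set X) D₂

variable [R1Space X] [BorelSpace X]

lemma MeasureTheory.Content.sum_mul_measure_le {κ : Type*} (Λ : Content X) {s : Finset κ}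
    {U : κ → Set X} (hU : ∀ k, IsOpen (U k)) (w : κ → ℝ≥0∞) {c : ℝ≥0∞}
    (h : ∀ D : κ → Compacts X, (∀ k, (D k : Set X) ⊆ U k) → ∑ k ∈ s, w k * Λ (D k) ≤ c) :
    ∑ k ∈ s, w k * Λ.measure (U k) ≤ c := by
  classical
  let A := {D : κ → Compacts X // ∀ k, (D k : Set X) ⊆ U k}
  have hmeasure (k : κ) : Λ.measure (U k) = ⨆ D : A, Λ (D.1 k) := by
    rw [Λ.measure_apply (hU k).measurableSet, Λ.outerMeasure_of_isOpen _ (hU k)]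
    refine le_antisymm (iSup₂_le fun D hD => ?_) (iSup_le fun D => Λ.le_innerContent _ _ (D.2 k))
    refine le_iSup_of_le ⟨Function.update (fun _ => ⊥) k D, fun j => ?_⟩ (by simp)
    rcases eq_or_ne j k with rfl | hj
    · simpa using hD
    · simp [hj]
  calc ∑ k ∈ s, w k * Λ.measure (U k) = ⨆ D : A, ∑ k ∈ s, w k * Λ (D.1 k) := by
        simp_rw [hmeasure, ENNReal.mul_iSup]
        refine ENNReal.finsetSum_iSup fun D D' => ⟨⟨D.1 ⊔ D'.1, fun k => ?_⟩, fun k => ?_⟩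
        · exact union_subset (D.2 k) (D'.2 k)
        · exact ⟨by gcongr; exact Λ.mono _ _ subset_union_left,
            by gcongr; exact Λ.mono _ _ subset_union_right⟩
    _ ≤ c := iSup_le fun D => h D.1 D.2

variable {L : Filter ι} [L.NeBot] {ν : ι → Measure X} {ℓ : Compacts X → ℝ≥0}
  (hℓ : ∀ D : Compacts X, Tendsto (fun i => ν i D) L (𝓝 (ℓ D)))
include hℓ

lemma limitContent_measure_le_of_isOpen {U : Set X} (hU : IsOpen U) {a : ℝ≥0∞}
    (h : ∀ i, ν i U ≤ a) : (limitContent ν L ℓ hℓ).measure U ≤ a := by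
  rw [Content.measure_apply _ hU.measurableSet, Content.outerMeasure_of_isOpen _ _ hU]
  exact iSup₂_le fun D hD => le_of_tendsto' (hℓ D) fun i => (measure_mono hD).trans (h i)

lemma le_limitContent_measure (D : Compacts X) :
    (ℓ D : ℝ≥0∞) ≤ (limitContent ν L ℓ hℓ).measure D :=
  ((limitContent ν L ℓ hℓ).le_outerMeasure_compacts D).trans (le_toMeasure_apply _ _ _)

lemma lintegral_limitContent_measure_le {g : X → ℝ≥0∞} (hg : LowerSemicontinuous g)
    {c : ℝ≥0∞} (h : ∀ i, ∫⁻ x, g x ∂ν i ≤ c) :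
    ∫⁻ x, g x ∂(limitContent ν L ℓ hℓ).measure ≤ c := by
  refine lintegral_le_of_forall_lintegral_staircase_le hg.measurable fun t N => ?_
  rw [lintegral_staircase hg.measurable]
  refine Content.sum_mul_measure_le _ (fun _ => hg.isOpen_preimage _) _ fun D hD => ?_
  have hlim : Tendsto (fun i => ∑ k ∈ Finset.Icc 1 N, (t : ℝ≥0∞) * ν i (D k)) L
      (𝓝 (∑ k ∈ Finset.Icc 1 N, (t : ℝ≥0∞) * ℓ (D k))) :=
    tendsto_finsetSum _ fun k _ => ENNReal.Tendsto.const_mul (hℓ _) (Or.inr ENNReal.coe_ne_top)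
  refine le_of_tendsto' hlim fun i => ?_
  calc ∑ k ∈ Finset.Icc 1 N, (t : ℝ≥0∞) * ν i (D k)
      ≤ ∑ k ∈ Finset.Icc 1 N, t * ν i {y | (k : ℝ≥0∞) * t < g y} := by
        gcongr with k; exact hD k
    _ = ∫⁻ x, staircase g t N x ∂ν i := (lintegral_staircase hg.measurable t N _).symm
    _ ≤ ∫⁻ x, g x ∂ν i := lintegral_mono (staircase_le g t N)
    _ ≤ c := h i

end LimitContent

section Capacity

variable {X : Type*} [TopologicalSpace X] [MeasurableSpace X]

def IsAdmissibleMeasure (K : X → X → ℝ≥0∞) (F : Set X) (μ : Measure X) : Prop :=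
  μ.InnerRegular ∧ IsLocallyFiniteMeasure μ ∧ μ Fᶜ = 0 ∧ ∀ z : X, ∫⁻ ζ, K z ζ ∂μ ≤ 1

variable {K : X → X → ℝ≥0∞} {F : Set X} {μ : Measure X}

lemma genCapac_eq_sSup :
    genCapac K F = sSup ((fun μ => μ F) '' {μ | IsAdmissibleMeasure K F μ}) :=
  sSup_image.symm

lemma IsAdmissibleMeasure.le_genCapac (hμ : IsAdmissibleMeasure K F μ) : μ F ≤ genCapac K F :=
  le_iSup₂ (f := fun μ (_ : IsAdmissibleMeasure K F μ) => μ F) μ hμ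

lemma genCapac_le {c : ℝ≥0∞} (h : ∀ μ, IsAdmissibleMeasure K F μ → μ F ≤ c) :
    genCapac K F ≤ c :=
  iSup₂_le h

lemma IsAdmissibleMeasure.measure_le_genCapac [OpensMeasurableSpace X] (hF : IsClosed F)
    (hμ : IsAdmissibleMeasure K F μ) (s : Set X) : μ s ≤ genCapac K F := by
  calc μ s ≤ μ F := by
        grw [← measure_inter_add_sdiff s hF.measurableSet, measure_mono (sdiff_subset_compl s F),
          hμ.2.2.1]
        simpa using measure_mono inter_subset_right
    _ ≤ genCapac K F := hμ.le_genCapac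

lemma IsAdmissibleMeasure.mul_measure_le_one (hμ : IsAdmissibleMeasure K F μ) {z : X}
    (hKz : Measurable (K z)) (r : ℝ≥0∞) : r * μ {ζ | r < K z ζ} ≤ 1 :=
  calc r * μ {ζ | r < K z ζ} ≤ r * μ {ζ | r ≤ K z ζ} := by
        gcongr r * ?_
        exact measure_mono fun ζ (hζ : r < K z ζ) => le_of_lt hζ
    _ ≤ ∫⁻ ζ, K z ζ ∂μ := mul_meas_ge_le_lintegral hKz r
    _ ≤ 1 := hμ.2.2.2 z

lemma exists_seq_isAdmissibleMeasure_tendsto_genCapac (K : X → X → ℝ≥0∞) (F : Set X) :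
    ∃ ν : ℕ → Measure X, (∀ n, IsAdmissibleMeasure K F (ν n)) ∧
      Tendsto (fun n => ν n F) atTop (𝓝 (genCapac K F)) := by
  have hzero : IsAdmissibleMeasure K F 0 := ⟨inferInstance, inferInstance, rfl, fun _ => by simp⟩
  obtain ⟨a, -, ha, haS⟩ := exists_seq_tendsto_sSup
    (S := (fun μ => μ F) '' {μ | IsAdmissibleMeasure K F μ}) ⟨0, 0, hzero, rfl⟩
    (OrderTop.bddAbove _)
  choose ν hν hνa using haS
  exact ⟨ν, hν, by simpa [hνa, genCapac_eq_sSup] using ha⟩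

lemma genCapac_lt_top [OpensMeasurableSpace X] (hK : ∀ z, LowerSemicontinuous (K z))
    (hKnz : ∀ ζ : X, ∃ z : X, K z ζ ≠ 0) (hF : IsCompact F) : genCapac K F < ∞ := by
  have hpos (ζ : F) : ∃ z r, 0 < r ∧ r < K z ζ := by
    obtain ⟨z, hz⟩ := hKnz ζ
    exact ⟨z, exists_between (pos_iff_ne_zero.2 hz)⟩
  choose z r hr0 hr using hpos
  obtain ⟨s, hs⟩ := hF.elim_finite_subcover (fun ζ => {ζ' | r ζ < K (z ζ) ζ'})
    (fun ζ => (hK (z ζ)).isOpen_preimage _) fun ζ hζ => mem_iUnion.2 ⟨⟨ζ, hζ⟩, hr _⟩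
  refine lt_of_le_of_lt (genCapac_le fun μ hμ => ?_)
    (ENNReal.sum_lt_top.2 fun ζ _ => ENNReal.inv_lt_top.2 (hr0 ζ) : ∑ ζ ∈ s, (r ζ)⁻¹ < ∞)
  calc μ F ≤ ∑ ζ ∈ s, μ {ζ' | r ζ < K (z ζ) ζ'} :=
        (measure_mono hs).trans (measure_biUnion_finset_le _ _)
    _ ≤ ∑ ζ ∈ s, (r ζ)⁻¹ := Finset.sum_le_sum fun ζ _ => by
        rw [ENNReal.le_inv_iff_mul_le, mul_comm]
        exact hμ.mul_measure_le_one (hK (z ζ)).measurable (r ζ)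

end Capacity

/-- Fuglede's property (iv): the supremum defining the capacity of a compact set is
attained by an equilibrium measure. -/
theorem stmt16 {X : Type*} [TopologicalSpace X] [T2Space X] [LocallyCompactSpace X]
    [MeasurableSpace X] [BorelSpace X]
    (K : X → X → ℝ≥0∞) (hK : LowerSemicontinuous fun p : X × X => K p.1 p.2)
    (hKnz : ∀ ζ : X, ∃ z : X, K z ζ ≠ 0)
    (F : Set X) (hF : IsCompact F) :
    ∃ μ : Measure X, μ.InnerRegular ∧ IsLocallyFiniteMeasure μ ∧ μ Fᶜ = 0 ∧
      (∀ z : X, ∫⁻ ζ, K z ζ ∂μ ≤ 1) ∧ μ F = genCapac K F := by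
  have hKz (z : X) : LowerSemicontinuous (K z) := hK.comp (Continuous.prodMk_right z)
  have hC : genCapac K F < ∞ := genCapac_lt_top hKz hKnz hF
  obtain ⟨ν, hν, hνF⟩ := exists_seq_isAdmissibleMeasure_tendsto_genCapac K F
  let u := Ultrafilter.of (atTop : Filter ℕ)
  obtain ⟨ℓ, hℓ⟩ := u.exists_tendsto_nnreal (f := fun (D : Compacts X) n => ν n D) hC.ne
    fun D n => (hν n).measure_le_genCapac hF.isClosed D
  let μ := (limitContent ν u ℓ hℓ).measure
  have hμ : μ univ ≤ genCapac K F := limitContent_measure_le_of_isOpen hℓ isOpen_univ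
    fun n => (hν n).measure_le_genCapac hF.isClosed _
  have : IsFiniteMeasure μ := ⟨hμ.trans_lt hC⟩
  have hℓF : (ℓ ⟨F, hF⟩ : ℝ≥0∞) = genCapac K F :=
    tendsto_nhds_unique (hℓ ⟨F, hF⟩) (hνF.mono_left (Ultrafilter.of_le _))
  refine ⟨μ, inferInstance, inferInstance, ?_, fun z => ?_, ?_⟩
  · exact nonpos_iff_eq_zero.1 <| limitContent_measure_le_of_isOpen hℓ hF.isClosed.isOpen_compl
      fun n => (hν n).2.2.1.le
  · exact lintegral_limitContent_measure_le hℓ (hKz z) fun n => (hν n).2.2.2 z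
  · exact le_antisymm ((measure_mono (subset_univ F)).trans hμ)
      (hℓF ▸ le_limitContent_measure hℓ ⟨F, hF⟩)

end
end
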